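/- arXiv:1903.04616 — 2 statements merged into one kernel-verified Lean document; each statement's English description precedes it below -/
import Mathlib

section
/- In the q-oscillator Fock representation, the squared ladder operators satisfy [(A⁺)², (A⁻)²] = −(1+q)·q^{A⁰}·((q+q⁻¹)N + 1), where N = A⁺A⁻. -/
noncomputable section

/-- The `k`-mode q-oscillator Fock space: formal complex linear combinations of
occupation-number basis states `|n₁,…,n_k⟩`. -/
abbrev Fock (k : ℕ) := (Fin k → ℕ) →₀ ℂ

/-- Lowering coefficient `√((1−qᵐ)/(1−q))`. -/
def cf (q : ℝ) (m : ℕ) : ℂ := (Real.sqrt ((1 - q ^ m) / (1 - q)) : ℝ)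

/-- Raising operator in mode `i`: `A⁺|n⟩ = √((1−q^{n+1})/(1−q)) |n+1⟩`. -/
def up (q : ℝ) {k : ℕ} (i : Fin k) : Module.End ℂ (Fock k) :=
  Finsupp.lsum ℂ fun n => cf q (n i + 1) • Finsupp.lsingle (Function.update n i (n i + 1))

/-- Lowering operator in mode `i`: `A⁻|n⟩ = √((1−qⁿ)/(1−q)) |n−1⟩` (kills `|0⟩`). -/
def dn (q : ℝ) {k : ℕ} (i : Fin k) : Module.End ℂ (Fock k) :=
  Finsupp.lsum ℂ fun n => cf q (n i) • Finsupp.lsingle (Function.update n i (n i - 1))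

/-- Diagonal operator acting on `|n⟩` by the scalar `d n`. -/
def diag {k : ℕ} (d : (Fin k → ℕ) → ℂ) : Module.End ℂ (Fock k) :=
  Finsupp.lsum ℂ fun n => d n • Finsupp.lsingle n

/-- `q`-exponential of a diagonal operator: acts on `|n⟩` by `q^{E n}` (real power). -/
def qd (q : ℝ) {k : ℕ} (E : (Fin k → ℕ) → ℝ) : Module.End ℂ (Fock k) :=
  diag fun n => ((q ^ (E n) : ℝ) : ℂ)

/-- Basis state `|n⟩`. -/
def ket {k : ℕ} (n : Fin k → ℕ) : Fock k := Finsupp.single n 1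

def e (m : ℕ) : Fock 1 := Finsupp.single (fun _ => m) 1

lemma upd1 (n : Fin 1 → ℕ) (a : ℕ) : Function.update n 0 a = fun _ => a := by
  funext j; rw [Subsingleton.elim j 0]; simp

lemma up_e (q : ℝ) (m : ℕ) : up q 0 (e m) = cf q (m+1) • e (m+1) := by
  simp [up, e, upd1, Finsupp.smul_single]

lemma dn_e (q : ℝ) (m : ℕ) : dn q 0 (e m) = cf q m • e (m-1) := by
  simp [dn, e, upd1, Finsupp.smul_single]

lemma diag_e {d : (Fin 1 → ℕ) → ℂ} (m : ℕ) : diag d (e m) = d (fun _ => m) • e m := by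
  simp [diag, e, Finsupp.smul_single]

lemma cf_sq (q : ℝ) (hq0 : 0 < q) (hq1 : q < 1) (m : ℕ) :
    cf q m * cf q m = (((1 - q ^ m) / (1 - q) : ℝ) : ℂ) := by
  unfold cf
  rw [← Complex.ofReal_mul, Real.mul_self_sqrt]
  apply div_nonneg
  · have := pow_le_one₀ hq0.le hq1.le (n := m); linarith
  · linarith


lemma cf_zero (q : ℝ) : cf q 0 = 0 := by simp [cf]

lemma cf_sq' (q : ℝ) (hq0 : 0 < q) (hq1 : q < 1) (m : ℕ) :
    cf q m ^ 2 = (1 - (q:ℂ) ^ m) / (1 - (q:ℂ)) := by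
  rw [pow_two, cf_sq q hq0 hq1]; push_cast; ring


/-- `[(A⁺)², (A⁻)²] = −(1+q)·q^{A⁰}·((q+q⁻¹)N + 1)` with `N = A⁺A⁻`. -/
theorem stmt2 (q : ℝ) (hq0 : 0 < q) (hq1 : q < 1) :
    let Ap : Module.End ℂ (Fock 1) := up q 0
    let Am : Module.End ℂ (Fock 1) := dn q 0
    let qA0 : Module.End ℂ (Fock 1) := diag fun n => (((q : ℝ) ^ (n 0) : ℝ) : ℂ)
    let N : Module.End ℂ (Fock 1) := Ap * Am
    Ap ^ 2 * Am ^ 2 - Am ^ 2 * Ap ^ 2 =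
      (-(1 + q) : ℂ) • (qA0 * (((q + q⁻¹ : ℝ) : ℂ) • N + 1)) := by
  intro Ap Am qA0 N
  have hq : (1 : ℂ) - (q : ℂ) ≠ 0 := by
    intro h
    have : (q : ℂ) = 1 := by linear_combination -h
    exact absurd (by exact_mod_cast this) (by linarith)
  have hqne : (q : ℂ) ≠ 0 := by exact_mod_cast hq0.ne'
  apply Finsupp.lhom_ext
  intro n b
  have hn : n = fun _ => n 0 := by funext j; rw [Subsingleton.elim j 0]
  have hb : (Finsupp.single n b : Fock 1) = b • e (n 0) := by
    rw [hn, e, Finsupp.smul_single, smul_eq_mul, mul_one]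
  rw [hb, map_smul, map_smul]
  congr 1
  set m := n 0 with hm
  clear_value m
  show (Ap ^ 2 * Am ^ 2 - Am ^ 2 * Ap ^ 2) (e m) =
    ((-(1 + q) : ℂ) • (qA0 * (((q + q⁻¹ : ℝ) : ℂ) • N + 1))) (e m)
  simp only [LinearMap.sub_apply, LinearMap.smul_apply, Module.End.mul_apply, pow_two,
    LinearMap.add_apply, Module.End.one_apply]
  match m with
  | 0 =>
    simp [Ap, Am, N, qA0, Module.End.mul_apply, up_e, dn_e, diag_e, map_add, map_smul,
      smul_smul, cf_zero, -Complex.coe_smul]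
    rw [← neg_smul]
    congr 1
    ring_nf
    simp only [cf_sq' q hq0 hq1]
    field_simp
    ring
  | 1 =>
    simp [Ap, Am, N, qA0, Module.End.mul_apply, up_e, dn_e, diag_e, map_add, map_smul,
      smul_smul, cf_zero, -Complex.coe_smul]
    rw [← neg_smul, ← add_smul]
    congr 1
    ring_nf
    simp only [cf_sq' q hq0 hq1]
    field_simp
    ring
  | (a+2) =>
    simp [Ap, Am, N, qA0, Module.End.mul_apply, up_e, dn_e, diag_e, map_add, map_smul,
      smul_smul, cf_zero, -Complex.coe_smul]
    rw [show a+1+1 = a+2 from rfl, ← sub_smul, ← add_smul]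
    congr 1
    ring_nf
    simp only [cf_sq' q hq0 hq1]
    field_simp
    ring
end
end

section
/- In the two-mode q-oscillator realization, the square of 𝓛₁₂ = q^{−A₁⁰/2+1/4}(q^{1/4}A₁⁺A₂⁻ − q^{−1/4}A₁⁻A₂⁺) is given by 𝓛₁₂² = q^{−A₁⁰+1/2}(q(A₁⁺)²(A₂⁻)² + q⁻¹(A₁⁻)²(A₂⁺)² − q^{1/2}N₁ − q^{−1/2}N₂ − q(q^{1/2}+q^{−1/2})N₁N₂), where Nᵢ = Aᵢ⁺Aᵢ⁻. -/
set_option maxHeartbeats 1000000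

noncomputable section

/-! ### Auxiliary action lemmas -/

lemma up_single (q : ℝ) {k : ℕ} (i : Fin k) (n : Fin k → ℕ) (x : ℂ) :
    up q i (Finsupp.single n x) =
      Finsupp.single (Function.update n i (n i + 1)) (cf q (n i + 1) * x) := by
  simp [up, Finsupp.smul_single]

lemma dn_single (q : ℝ) {k : ℕ} (i : Fin k) (n : Fin k → ℕ) (x : ℂ) :
    dn q i (Finsupp.single n x) =
      Finsupp.single (Function.update n i (n i - 1)) (cf q (n i) * x) := by
  simp [dn, Finsupp.smul_single]

lemma qd_single (q : ℝ) {k : ℕ} (E : (Fin k → ℕ) → ℝ) (n : Fin k → ℕ) (x : ℂ) :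
    qd q E (Finsupp.single n x) = Finsupp.single n (((q ^ (E n) : ℝ) : ℂ) * x) := by
  simp [qd, diag, Finsupp.smul_single]

/-! ### Commutation of different modes -/

lemma up_dn_comm (q : ℝ) {k : ℕ} {i j : Fin k} (h : i ≠ j) :
    up q i * dn q j = dn q j * up q i := by
  refine Finsupp.lhom_ext fun n x => ?_
  simp only [Module.End.mul_apply, up_single, dn_single, Function.update_of_ne h,
    Function.update_of_ne h.symm]
  rw [Function.update_comm h]
  ring_nf

lemma up_up_comm (q : ℝ) {k : ℕ} {i j : Fin k} (h : i ≠ j) :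
    up q i * up q j = up q j * up q i := by
  refine Finsupp.lhom_ext fun n x => ?_
  simp only [Module.End.mul_apply, up_single, Function.update_of_ne h,
    Function.update_of_ne h.symm]
  rw [Function.update_comm h]
  ring_nf

lemma dn_dn_comm (q : ℝ) {k : ℕ} {i j : Fin k} (h : i ≠ j) :
    dn q i * dn q j = dn q j * dn q i := by
  refine Finsupp.lhom_ext fun n x => ?_
  simp only [Module.End.mul_apply, dn_single, Function.update_of_ne h,
    Function.update_of_ne h.symm]
  rw [Function.update_comm h]
  ring_nf

/-! ### Same-mode relation `A⁻A⁺ = 1 + q A⁺A⁻` -/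

lemma dn_up_same (q : ℝ) (hq0 : 0 < q) (hq1 : q < 1) {k : ℕ} (i : Fin k) :
    dn q i * up q i = 1 + (q : ℂ) • (up q i * dn q i) := by
  have h2 : (1:ℝ) - q ≠ 0 := by linarith
  refine Finsupp.lhom_ext fun n x => ?_
  simp only [Module.End.mul_apply, up_single, dn_single, LinearMap.add_apply,
    Module.End.one_apply, LinearMap.smul_apply, Function.update_self,
    Function.update_idem, Nat.add_sub_cancel, Function.update_eq_self,
    Finsupp.smul_single]
  rcases hn : n i with _ | m
  · simp only [hn, Nat.zero_sub, cf_zero, mul_zero, zero_mul, smul_zero,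
      Finsupp.single_zero, add_zero, zero_add]
    rw [← mul_assoc, cf_sq q hq0 hq1 1]
    have : ((1:ℝ) - q ^ 1) / (1 - q) = 1 := by rw [pow_one]; field_simp
    rw [this]; simp
  · have hidx : Function.update n i (m + 1) = n := by
      rw [← hn]; exact Function.update_eq_self i n
    simp only [hn, Nat.add_sub_cancel, hidx]
    rw [← Finsupp.single_add]
    congr 1
    have e1 : cf q (m + 1 + 1) * (cf q (m + 1 + 1) * x) =
        (((1 - q ^ (m+1+1)) / (1 - q) : ℝ) : ℂ) * x := by
      rw [← mul_assoc, cf_sq q hq0 hq1]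
    have e2 : (q:ℂ) • (cf q (m + 1) * (cf q (m + 1) * x)) =
        (q:ℂ) * ((((1 - q ^ (m+1)) / (1 - q) : ℝ) : ℂ) * x) := by
      rw [← mul_assoc, cf_sq q hq0 hq1, smul_eq_mul]
    rw [e1, e2]
    have key : (((1 - q ^ (m+1+1)) / (1 - q) : ℝ) : ℂ) =
        1 + (q:ℂ) * (((1 - q ^ (m+1)) / (1 - q) : ℝ) : ℂ) := by
      push_cast
      have hc : ((1:ℂ) - q) ≠ 0 := by
        intro h; apply h2
        have := congrArg Complex.re h; simpa using this
      field_simp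
      ring
    rw [key]; ring

/-! ### Commutation with the diagonal factor -/

lemma qd_up1 (q : ℝ) :
    up q 1 * qd q (fun n : Fin 2 → ℕ => -((n 0 : ℝ)) / 2 + 1/4) =
      qd q (fun n : Fin 2 → ℕ => -((n 0 : ℝ)) / 2 + 1/4) * up q 1 := by
  refine Finsupp.lhom_ext fun n x => ?_
  simp only [Module.End.mul_apply, up_single, qd_single,
    Function.update_of_ne (show (0:Fin 2) ≠ 1 by decide)]
  ring_nf

lemma qd_dn1 (q : ℝ) :
    dn q 1 * qd q (fun n : Fin 2 → ℕ => -((n 0 : ℝ)) / 2 + 1/4) =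
      qd q (fun n : Fin 2 → ℕ => -((n 0 : ℝ)) / 2 + 1/4) * dn q 1 := by
  refine Finsupp.lhom_ext fun n x => ?_
  simp only [Module.End.mul_apply, dn_single, qd_single,
    Function.update_of_ne (show (0:Fin 2) ≠ 1 by decide)]
  ring_nf

lemma qd_up0 (q : ℝ) (hq0 : 0 < q) :
    up q 0 * qd q (fun n : Fin 2 → ℕ => -((n 0 : ℝ)) / 2 + 1/4) =
      ((q ^ ((1:ℝ)/2) : ℝ) : ℂ) •
        (qd q (fun n : Fin 2 → ℕ => -((n 0 : ℝ)) / 2 + 1/4) * up q 0) := by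
  refine Finsupp.lhom_ext fun n x => ?_
  simp only [Module.End.mul_apply, up_single, qd_single, Function.update_self,
    LinearMap.smul_apply, Finsupp.smul_single, smul_eq_mul]
  congr 1
  have : ((q ^ (-((n 0 : ℝ)) / 2 + 1/4) : ℝ) : ℂ) =
      ((q ^ ((1:ℝ)/2) : ℝ) : ℂ) * ((q ^ (-((n 0 + 1 : ℕ) : ℝ) / 2 + 1/4) : ℝ) : ℂ) := by
    rw [← Complex.ofReal_mul, ← Real.rpow_add hq0]
    congr 1
    push_cast
    ring
  rw [this]; ring

lemma qd_dn0 (q : ℝ) (hq0 : 0 < q) :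
    dn q 0 * qd q (fun n : Fin 2 → ℕ => -((n 0 : ℝ)) / 2 + 1/4) =
      ((q ^ (-(1:ℝ)/2) : ℝ) : ℂ) •
        (qd q (fun n : Fin 2 → ℕ => -((n 0 : ℝ)) / 2 + 1/4) * dn q 0) := by
  refine Finsupp.lhom_ext fun n x => ?_
  simp only [Module.End.mul_apply, dn_single, qd_single, Function.update_self,
    LinearMap.smul_apply, Finsupp.smul_single, smul_eq_mul]
  rcases hn : n 0 with _ | m
  · simp [cf_zero]
  · congr 1
    have : ((q ^ (-((m + 1 : ℕ) : ℝ) / 2 + 1/4) : ℝ) : ℂ) =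
        ((q ^ (-(1:ℝ)/2) : ℝ) : ℂ) * ((q ^ (-((m + 1 - 1 : ℕ) : ℝ) / 2 + 1/4) : ℝ) : ℂ) := by
      rw [← Complex.ofReal_mul, ← Real.rpow_add hq0]
      congr 1
      push_cast
      ring
    rw [this]; ring

lemma qd_qd (q : ℝ) (hq0 : 0 < q) :
    qd q (fun n : Fin 2 → ℕ => -((n 0 : ℝ)) / 2 + 1/4) *
      qd q (fun n : Fin 2 → ℕ => -((n 0 : ℝ)) / 2 + 1/4) =
      qd q (fun n : Fin 2 → ℕ => -((n 0 : ℝ)) + 1/2) := by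
  refine Finsupp.lhom_ext fun n x => ?_
  simp only [Module.End.mul_apply, qd_single]
  rw [← mul_assoc, ← Complex.ofReal_mul, ← Real.rpow_add hq0]
  have : (-((n 0 : ℝ)) / 2 + 1/4 + (-((n 0 : ℝ)) / 2 + 1/4)) = -((n 0 : ℝ)) + 1/2 := by ring
  rw [this]

theorem stmt12 (q : ℝ) (hq0 : 0 < q) (hq1 : q < 1) :
    let L12 : Module.End ℂ (Fock 2) :=
      qd q (fun n => -((n 0 : ℝ)) / 2 + 1/4) *
        (((q ^ ((1:ℝ)/4) : ℝ) : ℂ) • (up q 0 * dn q 1)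
          - ((q ^ (-(1:ℝ)/4) : ℝ) : ℂ) • (dn q 0 * up q 1))
    let N1 : Module.End ℂ (Fock 2) := up q 0 * dn q 0
    let N2 : Module.End ℂ (Fock 2) := up q 1 * dn q 1
    L12 ^ 2 =
      qd q (fun n => -((n 0 : ℝ)) + 1/2) *
        ((q : ℂ) • ((up q 0) ^ 2 * (dn q 1) ^ 2)
          + ((q⁻¹ : ℝ) : ℂ) • ((dn q 0) ^ 2 * (up q 1) ^ 2)
          - ((q ^ ((1:ℝ)/2) : ℝ) : ℂ) • N1
          - ((q ^ (-(1:ℝ)/2) : ℝ) : ℂ) • N2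
          - ((q * (q ^ ((1:ℝ)/2) + q ^ (-(1:ℝ)/2)) : ℝ) : ℂ) • (N1 * N2)) := by
  intro L12 N1 N2
  have h01 : (0 : Fin 2) ≠ 1 := by decide
  have h10 : (1 : Fin 2) ≠ 0 := by decide
  set Q : Module.End ℂ (Fock 2) := qd q (fun n => -((n 0 : ℝ)) / 2 + 1/4) with hQdef
  set a : ℂ := ((q ^ ((1:ℝ)/4) : ℝ) : ℂ) with hadef
  set b : ℂ := ((q ^ (-(1:ℝ)/4) : ℝ) : ℂ) with hbdef
  set c : ℂ := ((q ^ ((1:ℝ)/2) : ℝ) : ℂ) with hcdef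
  set c' : ℂ := ((q ^ (-(1:ℝ)/2) : ℝ) : ℂ) with hc'def
  set X : Module.End ℂ (Fock 2) := up q 0 * dn q 1 with hXdef
  set Y : Module.End ℂ (Fock 2) := dn q 0 * up q 1 with hYdef
  -- structural product identities
  have hXX : X * X = (up q 0) ^ 2 * (dn q 1) ^ 2 := by
    rw [hXdef, mul_assoc (up q 0) (dn q 1) (up q 0 * dn q 1),
      ← mul_assoc (dn q 1) (up q 0) (dn q 1), ← up_dn_comm q h01,
      mul_assoc (up q 0) (dn q 1) (dn q 1),
      ← mul_assoc (up q 0) (up q 0) (dn q 1 * dn q 1),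
      ← pow_two (up q 0), ← pow_two (dn q 1)]
  have hYY : Y * Y = (dn q 0) ^ 2 * (up q 1) ^ 2 := by
    rw [hYdef, mul_assoc (dn q 0) (up q 1) (dn q 0 * up q 1),
      ← mul_assoc (up q 1) (dn q 0) (up q 1), up_dn_comm q h10,
      mul_assoc (dn q 0) (up q 1) (up q 1),
      ← mul_assoc (dn q 0) (dn q 0) (up q 1 * up q 1),
      ← pow_two (dn q 0), ← pow_two (up q 1)]
  have hXY : X * Y = N1 + (q:ℂ) • (N1 * N2) := by
    rw [hXdef, hYdef, mul_assoc (up q 0) (dn q 1) (dn q 0 * up q 1),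
      ← mul_assoc (dn q 1) (dn q 0) (up q 1), dn_dn_comm q h10,
      mul_assoc (dn q 0) (dn q 1) (up q 1),
      ← mul_assoc (up q 0) (dn q 0) (dn q 1 * up q 1), dn_up_same q hq0 hq1 1]
    show (up q 0 * dn q 0) * (1 + (q:ℂ) • (up q 1 * dn q 1)) =
      (up q 0 * dn q 0) + (q:ℂ) • ((up q 0 * dn q 0) * (up q 1 * dn q 1))
    rw [mul_add (up q 0 * dn q 0) 1 ((q:ℂ) • (up q 1 * dn q 1)),
      mul_one (up q 0 * dn q 0),
      mul_smul_comm (q:ℂ) (up q 0 * dn q 0) (up q 1 * dn q 1)]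
  have hYX : Y * X = N2 + (q:ℂ) • (N1 * N2) := by
    rw [hYdef, hXdef, mul_assoc (dn q 0) (up q 1) (up q 0 * dn q 1),
      ← mul_assoc (up q 1) (up q 0) (dn q 1), ← up_up_comm q h01,
      mul_assoc (up q 0) (up q 1) (dn q 1),
      ← mul_assoc (dn q 0) (up q 0) (up q 1 * dn q 1), dn_up_same q hq0 hq1 0]
    show (1 + (q:ℂ) • (up q 0 * dn q 0)) * (up q 1 * dn q 1) =
      (up q 1 * dn q 1) + (q:ℂ) • ((up q 0 * dn q 0) * (up q 1 * dn q 1))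
    rw [add_mul 1 ((q:ℂ) • (up q 0 * dn q 0)) (up q 1 * dn q 1),
      one_mul (up q 1 * dn q 1),
      smul_mul_assoc (q:ℂ) (up q 0 * dn q 0) (up q 1 * dn q 1)]
  -- moving Q past X and Y
  have hXQ : X * Q = c • (Q * X) := by
    rw [hXdef, mul_assoc (up q 0) (dn q 1) Q, qd_dn1 q,
      ← mul_assoc (up q 0) Q (dn q 1), qd_up0 q hq0,
      smul_mul_assoc c (Q * up q 0) (dn q 1), mul_assoc Q (up q 0) (dn q 1)]
  have hYQ : Y * Q = c' • (Q * Y) := by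
    rw [hYdef, mul_assoc (dn q 0) (up q 1) Q, qd_up1 q,
      ← mul_assoc (dn q 0) Q (up q 1), qd_dn0 q hq0,
      smul_mul_assoc c' (Q * dn q 0) (up q 1), mul_assoc Q (dn q 0) (up q 1)]
  -- scalar identities
  have rpow_mul_rpow : ∀ u v : ℝ,
      ((q ^ u : ℝ) : ℂ) * ((q ^ v : ℝ) : ℂ) = ((q ^ (u+v) : ℝ) : ℂ) := by
    intro u v; rw [← Complex.ofReal_mul, ← Real.rpow_add hq0]
  have sac : a * c * a = (q : ℂ) := by
    rw [hadef, hcdef, rpow_mul_rpow, rpow_mul_rpow]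
    norm_num
  have sbc : b * c' * b = ((q⁻¹ : ℝ) : ℂ) := by
    rw [hbdef, hc'def, rpow_mul_rpow, rpow_mul_rpow]
    norm_num [Real.rpow_neg_one]
  have sacb : a * c * b = c := by
    rw [hadef, hcdef, hbdef, rpow_mul_rpow, rpow_mul_rpow]
    norm_num
  have sbca : b * c' * a = c' := by
    rw [hbdef, hc'def, hadef, rpow_mul_rpow, rpow_mul_rpow]
    norm_num
  -- the main chain
  have hL : L12 = Q * (a • X - b • Y) := rfl
  have hAQ : (a • X - b • Y) * Q = Q * ((a * c) • X - (b * c') • Y) := by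
    rw [sub_mul (a • X) (b • Y) Q, smul_mul_assoc a X Q, smul_mul_assoc b Y Q,
      hXQ, hYQ, mul_sub Q ((a * c) • X) ((b * c') • Y),
      mul_smul_comm (a * c) Q X, mul_smul_comm (b * c') Q Y,
      smul_smul a c (Q * X), smul_smul b c' (Q * Y)]
  calc L12 ^ 2 = Q * (((a • X - b • Y) * Q) * (a • X - b • Y)) := by
        rw [hL, pow_two (Q * (a • X - b • Y)),
          mul_assoc Q (a • X - b • Y) (Q * (a • X - b • Y)),
          ← mul_assoc (a • X - b • Y) Q (a • X - b • Y)]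
    _ = (Q * Q) * (((a * c) • X - (b * c') • Y) * (a • X - b • Y)) := by
        rw [hAQ, mul_assoc Q ((a * c) • X - (b * c') • Y) (a • X - b • Y),
          ← mul_assoc Q Q (((a * c) • X - (b * c') • Y) * (a • X - b • Y))]
    _ = qd q (fun n => -((n 0 : ℝ)) + 1/2) *
        ((q : ℂ) • ((up q 0) ^ 2 * (dn q 1) ^ 2)
          + ((q⁻¹ : ℝ) : ℂ) • ((dn q 0) ^ 2 * (up q 1) ^ 2)
          - c • N1 - c' • N2
          - ((q * (q ^ ((1:ℝ)/2) + q ^ (-(1:ℝ)/2)) : ℝ) : ℂ) • (N1 * N2)) := by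
        rw [hQdef, qd_qd q hq0]
        congr 1
        rw [sub_mul ((a * c) • X) ((b * c') • Y) (a • X - b • Y),
          mul_sub ((a * c) • X) (a • X) (b • Y),
          mul_sub ((b * c') • Y) (a • X) (b • Y),
          smul_mul_assoc (a * c) X (a • X), mul_smul_comm a X X,
          smul_mul_assoc (a * c) X (b • Y), mul_smul_comm b X Y,
          smul_mul_assoc (b * c') Y (a • X), mul_smul_comm a Y X,
          smul_mul_assoc (b * c') Y (b • Y), mul_smul_comm b Y Y,
          smul_smul (a * c) a (X * X), smul_smul (a * c) b (X * Y),
          smul_smul (b * c') a (Y * X), smul_smul (b * c') b (Y * Y),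
          hXX, hYY, hXY, hYX, sac, sbc, sacb, sbca]
        have hlast : ((q * (q ^ ((1:ℝ)/2) + q ^ (-(1:ℝ)/2)) : ℝ) : ℂ)
            = (q:ℂ) * (c + c') := by
          rw [hcdef, hc'def]
          push_cast
          ring
        rw [hlast]
        module
end
end
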